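/- Under the standing setup, suppose T_g is not a t-intersecting family and T_f is a t-intersecting family with |T_f| ≥ 2. Then |T_f| = 2 and |T_g| ≤ ℓ+1. -/
import Mathlib


/-- The interval `[a,b] = {a, a+1, …, b}` as a finset of naturals. -/
def Iv (a b : ℕ) : Finset ℕ := Finset.Icc a b

/-- `ksubsets S k` is the family of all `k`-element subsets of `S`. -/
def ksubsets (S : Finset ℕ) (k : ℕ) : Finset (Finset ℕ) :=
  S.powerset.filter (fun F => F.card = k)

/-- Families `F` and `G` are cross `t`-intersecting. -/
def crossInt (t : ℕ) (F G : Finset (Finset ℕ)) : Prop :=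
  ∀ A ∈ F, ∀ B ∈ G, t ≤ (A ∩ B).card

/-- The `t`-covering number of a family of subsets of `[n]`. -/
noncomputable def tau (n t : ℕ) (F : Finset (Finset ℕ)) : ℕ :=
  sInf {c : ℕ | ∃ T : Finset ℕ, T ⊆ Finset.Icc 1 n ∧ T.card = c ∧ ∀ A ∈ F, t ≤ (T ∩ A).card}

/-- The collection of all `t`-covers of `F` of size `t+1`. -/
def covers (n t : ℕ) (F : Finset (Finset ℕ)) : Finset (Finset ℕ) :=
  (Finset.Icc 1 n).powerset.filter (fun T => T.card = t + 1 ∧ ∀ A ∈ F, t ≤ (T ∩ A).card)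

/-- `F ⊆ ksubsets S k` and `G ⊆ ksubsets S l` form a maximal cross `t`-intersecting pair. -/
def maximalCrossIn (S : Finset ℕ) (k l t : ℕ) (F G : Finset (Finset ℕ)) : Prop :=
  F ⊆ ksubsets S k ∧ G ⊆ ksubsets S l ∧ crossInt t F G ∧
  ∀ F' G' : Finset (Finset ℕ), F' ⊆ ksubsets S k → G' ⊆ ksubsets S l →
    crossInt t F' G' → F ⊆ F' → G ⊆ G' → F = F' ∧ G = G'

/-- Elementwise image of a family under a permutation. -/
def mapFam (σ : Equiv.Perm ℕ) (F : Finset (Finset ℕ)) : Finset (Finset ℕ) :=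
  F.image (fun A => A.image σ)

/-- `σ` is a permutation of `[n]` (maps `[n]` into, hence onto, itself). -/
def permOn (n : ℕ) (σ : Equiv.Perm ℕ) : Prop := ∀ x ∈ Finset.Icc 1 n, σ x ∈ Finset.Icc 1 n

/-- The pairs `(F, G)` and `(F', G')` are isomorphic via a permutation of `[n]`. -/
def isoPair (n : ℕ) (F G F' G' : Finset (Finset ℕ)) : Prop :=
  ∃ σ : Equiv.Perm ℕ, permOn n σ ∧ mapFam σ F = F' ∧ mapFam σ G = G'

/-- `F` and `F'` are isomorphic via a permutation of `[n]`. -/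
def isoFam (n : ℕ) (F F' : Finset (Finset ℕ)) : Prop :=
  ∃ σ : Equiv.Perm ℕ, permOn n σ ∧ mapFam σ F = F'

/-- Construction `𝒜(k,t) = {F ∈ C([n],k) : |F ∩ [t+2]| ≥ t+1}`. -/
def famA (n k t : ℕ) : Finset (Finset ℕ) :=
  (ksubsets (Iv 1 n) k).filter (fun F => t + 1 ≤ (F ∩ Iv 1 (t+2)).card)

/-- Construction `𝒞₁(ℓ,t) = {[ℓ+1]\{i} : i ∈ [t+1]} ∪ {G ∈ C([n],ℓ) : [t+1] ⊆ G}`. -/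
def famC1 (n l t : ℕ) : Finset (Finset ℕ) :=
  (Iv 1 (t+1)).image (fun i => (Iv 1 (l+1)).erase i) ∪
  (ksubsets (Iv 1 n) l).filter (fun G => Iv 1 (t+1) ⊆ G)

/-- Construction `𝒞₂(k,t;ℓ)`. -/
def famC2 (n k t l : ℕ) : Finset (Finset ℕ) :=
  (ksubsets (Iv 1 n) k).filter
    (fun F => (F ∩ Iv 1 (t+1)).card = t ∧ 1 ≤ (F ∩ Iv (t+2) (l+1)).card) ∪
  (ksubsets (Iv 1 n) k).filter (fun F => Iv 1 (t+1) ⊆ F)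

/-- Construction `ℋ(k,t;X,Y) = {F ∈ C([n],k) : [t] ⊆ F, |F∩Y| ≥ 1} ∪ {(X∪[t])\{i} : i ∈ [t]}`. -/
def famH (n k t : ℕ) (X Y : Finset ℕ) : Finset (Finset ℕ) :=
  (ksubsets (Iv 1 n) k).filter (fun F => Iv 1 t ⊆ F ∧ 1 ≤ (F ∩ Y).card) ∪
  (Iv 1 t).image (fun i => (X ∪ Iv 1 t).erase i)

/-- Construction `ℬ(k;(a₁,a₂,a₃,a₄))`. -/
def famB (n k a1 a2 a3 a4 : ℕ) : Finset (Finset ℕ) :=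
  (ksubsets (Iv 1 n) k).filter
    (fun F => ({a1, a2} : Finset ℕ) ⊆ F ∨ ({a2, a3} : Finset ℕ) ⊆ F ∨ ({a3, a4} : Finset ℕ) ⊆ F)

/-- Binomial coefficient `C(a,b)` for integers, `0` if `b < 0` or `b > a`. -/
def ch (a b : ℤ) : ℤ := if 0 ≤ b ∧ b ≤ a then (Nat.choose a.toNat b.toNat : ℤ) else 0

/-- `g(m,x,y,t) = m·C(n−t−1,x−t−1) + y(t+1)(y−t+1)·C(n−t−2,x−t−2)`. -/
def gfun (n m x y t : ℤ) : ℤ :=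
  m * ch (n - t - 1) (x - t - 1) + y * (t + 1) * (y - t + 1) * ch (n - t - 2) (x - t - 2)

/-- `a(x,t) = (t+2)·C(n−t−2,x−t−1) + C(n−t−2,x−t−2)`. -/
def afun (n x t : ℤ) : ℤ := (t + 2) * ch (n - t - 2) (x - t - 1) + ch (n - t - 2) (x - t - 2)

/-- `c₁(y,t) = C(n−t−1,y−t−1) + t + 1`. -/
def c1fun (n y t : ℤ) : ℤ := ch (n - t - 1) (y - t - 1) + t + 1

/-- `c₂(x,y,t) = (t+1)(C(n−t−1,x−t) − C(n−y−1,x−t)) + C(n−t−1,x−t−1)`. -/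
def c2fun (n x y t : ℤ) : ℤ :=
  (t + 1) * (ch (n - t - 1) (x - t) - ch (n - y - 1) (x - t)) + ch (n - t - 1) (x - t - 1)

/-- `h(x,y,t) = C(n−t,x−t) − C(n−y−1,x−t) + t`. -/
def hfun (n x y t : ℤ) : ℤ := ch (n - t) (x - t) - ch (n - y - 1) (x - t) + t
private lemma mem_covers' {n t : ℕ} {F : Finset (Finset ℕ)} {T : Finset ℕ} :
    T ∈ covers n t F ↔ T ⊆ Finset.Icc 1 n ∧ T.card = t + 1 ∧ ∀ A ∈ F, t ≤ (T ∩ A).card := by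
  unfold covers
  rw [Finset.mem_filter, Finset.mem_powerset]

private lemma cross_cover (n k t : ℕ) (hk : t + 1 ≤ k) (hkn : k + t + 1 ≤ n)
    (F G : Finset (Finset ℕ))
    (hmem : ∀ A : Finset ℕ, A ⊆ Finset.Icc 1 n → A.card = k →
      (∀ B ∈ G, t ≤ (A ∩ B).card) → A ∈ F)
    (S T : Finset ℕ) (hS : S ∈ covers n t F) (hT : T ∈ covers n t G) :
    t ≤ (S ∩ T).card := by
  obtain ⟨hSsub, hScard, hScov⟩ := mem_covers'.mp hS
  obtain ⟨hTsub, hTcard, hTcov⟩ := mem_covers'.mp hT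
  by_contra hlt
  push_neg at hlt
  have hTU : T ⊆ Finset.Icc 1 n \ (S \ T) := by
    intro x hx
    simp only [Finset.mem_sdiff]
    exact ⟨hTsub hx, fun h => h.2 hx⟩
  have hsd : (S \ T).card ≤ t + 1 := hScard ▸ Finset.card_le_card Finset.sdiff_subset
  have hIcc : (Finset.Icc 1 n).card = n := by simp
  have hUcard : k ≤ (Finset.Icc 1 n \ (S \ T)).card := by
    rw [Finset.card_sdiff_of_subset (Finset.sdiff_subset.trans hSsub) ]
    omega
  obtain ⟨A, hTA, hAU, hAcard⟩ :=
    Finset.exists_subsuperset_card_eq hTU (by omega) hUcard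
  have hAF : A ∈ F := by
    refine hmem A (hAU.trans Finset.sdiff_subset) hAcard (fun B hB => ?_)
    exact (hTcov B hB).trans (Finset.card_le_card (Finset.inter_subset_inter hTA (le_refl B)))
  have hsub : S ∩ A ⊆ S ∩ T := by
    intro x hx
    rw [Finset.mem_inter] at hx ⊢
    refine ⟨hx.1, ?_⟩
    have h2 := hAU hx.2
    simp only [Finset.mem_sdiff] at h2
    by_contra hxT
    exact h2.2 ⟨hx.1, hxT⟩
  have := (hScov A hAF).trans (Finset.card_le_card hsub)
  omega

set_option maxHeartbeats 1600000 in
/-- Lemma 2.7(i). -/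
theorem Tf_intersecting_Tg_not
    (n k l t : ℕ) (hn0 : 0 < n) (ht0 : 0 < t) (hk : t + 1 ≤ k) (hl : t + 1 ≤ l)
    (hn : (t+1)^2 * (k+l)^2 * (k - t + 1) * (l - t + 1) + k + l - t ≤ n)
    (F G : Finset (Finset ℕ))
    (hmax : maximalCrossIn (Iv 1 n) k l t F G)
    (htF : tau n t F = t + 1) (htG : tau n t G = t + 1)
    (hTg : ¬ crossInt t (covers n t G) (covers n t G))
    (hTf : crossInt t (covers n t F) (covers n t F))
    (hTf2 : 2 ≤ (covers n t F).card) :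
    (covers n t F).card = 2 ∧ (covers n t G).card ≤ l + 1 := by
  classical
  obtain ⟨hFsub, hGsub, hcross, hmx⟩ := hmax
  -- arithmetic consequences of the size bound on n
  have hX : t + 1 ≤ (t+1)^2 * (k+l)^2 * (k - t + 1) * (l - t + 1) := by
    calc t + 1 ≤ (t+1)^2 := Nat.le_self_pow (by norm_num) _
      _ ≤ (t+1)^2 * (k+l)^2 := Nat.le_mul_of_pos_right _ (pow_pos (by omega) 2)
      _ ≤ (t+1)^2 * (k+l)^2 * (k - t + 1) := Nat.le_mul_of_pos_right _ (by omega)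
      _ ≤ (t+1)^2 * (k+l)^2 * (k - t + 1) * (l - t + 1) := Nat.le_mul_of_pos_right _ (by omega)
  obtain ⟨X, hX1, hX2⟩ : ∃ X, t + 1 ≤ X ∧ X + k + l - t ≤ n := ⟨_, hX, hn⟩
  clear hX hn
  have hkn : k + t + 1 ≤ n := by clear * - hX1 hX2 hk hl; omega
  have hln : l + t + 1 ≤ n := by clear * - hX1 hX2 hk hl; omega
  -- maximality: F is exactly the family of k-sets meeting all of G, and symmetrically
  have hFeq : ∀ A : Finset ℕ, A ⊆ Finset.Icc 1 n → A.card = k →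
      (∀ B ∈ G, t ≤ (A ∩ B).card) → A ∈ F := by
    intro A hA1 hA2 hA3
    have h1 : (ksubsets (Iv 1 n) k).filter (fun Z => ∀ B ∈ G, t ≤ (Z ∩ B).card) ⊆
        ksubsets (Iv 1 n) k := Finset.filter_subset _ _
    have h2 : crossInt t ((ksubsets (Iv 1 n) k).filter (fun Z => ∀ B ∈ G, t ≤ (Z ∩ B).card)) G :=
      fun Z hZ B hB => (Finset.mem_filter.mp hZ).2 B hB
    have h3 : F ⊆ (ksubsets (Iv 1 n) k).filter (fun Z => ∀ B ∈ G, t ≤ (Z ∩ B).card) :=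
      fun Z hZ => Finset.mem_filter.mpr ⟨hFsub hZ, fun B hB => hcross Z hZ B hB⟩
    have h4 := (hmx _ G h1 hGsub h2 h3 (le_refl G)).1
    rw [h4]
    exact Finset.mem_filter.mpr ⟨Finset.mem_filter.mpr ⟨Finset.mem_powerset.mpr hA1, hA2⟩, hA3⟩
  have hGeq : ∀ B : Finset ℕ, B ⊆ Finset.Icc 1 n → B.card = l →
      (∀ A ∈ F, t ≤ (B ∩ A).card) → B ∈ G := by
    intro B hB1 hB2 hB3
    have h1 : (ksubsets (Iv 1 n) l).filter (fun Z => ∀ A ∈ F, t ≤ (A ∩ Z).card) ⊆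
        ksubsets (Iv 1 n) l := Finset.filter_subset _ _
    have h2 : crossInt t F ((ksubsets (Iv 1 n) l).filter (fun Z => ∀ A ∈ F, t ≤ (A ∩ Z).card)) :=
      fun A hA Z hZ => (Finset.mem_filter.mp hZ).2 A hA
    have h3 : G ⊆ (ksubsets (Iv 1 n) l).filter (fun Z => ∀ A ∈ F, t ≤ (A ∩ Z).card) :=
      fun Z hZ => Finset.mem_filter.mpr ⟨hGsub hZ, fun A hA => hcross A hA Z hZ⟩
    have h4 := (hmx F _ hFsub h1 h2 (le_refl F) h3).2
    rw [h4]
    refine Finset.mem_filter.mpr ⟨Finset.mem_filter.mpr ⟨Finset.mem_powerset.mpr hB1, hB2⟩, ?_⟩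
    intro A hA
    rw [Finset.inter_comm]
    exact hB3 A hA
  have hcFG : ∀ S ∈ covers n t F, ∀ T ∈ covers n t G, t ≤ (S ∩ T).card :=
    fun S hS T hT => cross_cover n k t hk hkn F G hFeq S T hS hT
  have hcGF : ∀ S ∈ covers n t G, ∀ T ∈ covers n t F, t ≤ (S ∩ T).card :=
    fun S hS T hT => cross_cover n l t hl hln G F hGeq S T hS hT
  -- two covers of G with small intersection
  have hTg' : ∃ T1 ∈ covers n t G, ∃ T2 ∈ covers n t G, (T1 ∩ T2).card < t := by
    unfold crossInt at hTg; push_neg at hTg; exact hTg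
  obtain ⟨T1, hT1, T2, hT2, hIlt⟩ := hTg'
  have hT1card := (mem_covers'.mp hT1).2.1
  have hT2card := (mem_covers'.mp hT2).2.1
  -- structure of every cover of F
  have key : ∀ S ∈ covers n t F,
      T1 ∩ T2 ⊆ S ∧ (T1 ∩ T2).card = t - 1 ∧ S ⊆ T1 ∪ T2 ∧
      (S ∩ (T1 \ T2)).card = 1 ∧ (S ∩ (T2 \ T1)).card = 1 := by
    intro S hS
    have h1 := hcFG S hS T1 hT1
    have h2 := hcFG S hS T2 hT2
    have hScard := (mem_covers'.mp hS).2.1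
    have e1 : S ∩ T1 ∩ (S ∩ T2) = S ∩ (T1 ∩ T2) := by
      ext x; simp only [Finset.mem_inter]
      exact ⟨fun h => ⟨h.1.1, h.1.2, h.2.2⟩, fun h => ⟨⟨h.1, h.2.1⟩, ⟨h.1, h.2.2⟩⟩⟩
    have e2 : S ∩ T1 ∪ S ∩ T2 = S ∩ (T1 ∪ T2) := (Finset.inter_union_distrib_left S T1 T2).symm
    have e3 := Finset.card_inter_add_card_union (S ∩ T1) (S ∩ T2)
    rw [e1, e2] at e3
    have h4 : (S ∩ (T1 ∩ T2)).card ≤ (T1 ∩ T2).card :=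
      Finset.card_le_card Finset.inter_subset_right
    have h5 : (S ∩ (T1 ∪ T2)).card ≤ S.card := Finset.card_le_card Finset.inter_subset_left
    clear * - h1 h2 h4 h5 e3 hScard hT1card hT2card hIlt ht0
    have hIS : S ∩ (T1 ∩ T2) = T1 ∩ T2 :=
      Finset.eq_of_subset_of_card_le Finset.inter_subset_right (by omega)
    have hUS : S ∩ (T1 ∪ T2) = S :=
      Finset.eq_of_subset_of_card_le Finset.inter_subset_left (by omega)
    have e5 : S ∩ T1 ∩ T2 = S ∩ (T1 ∩ T2) := Finset.inter_assoc S T1 T2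
    have e6 : (S ∩ T1) \ T2 = S ∩ (T1 \ T2) := by
      ext x; simp only [Finset.mem_inter, Finset.mem_sdiff]
      exact and_assoc
    have e7 := Finset.card_inter_add_card_sdiff (S ∩ T1) T2
    rw [e5, e6] at e7
    have e8 : S ∩ T2 ∩ T1 = S ∩ (T1 ∩ T2) := by
      ext x; simp only [Finset.mem_inter]
      exact ⟨fun h => ⟨h.1.1, h.2, h.1.2⟩, fun h => ⟨⟨h.1, h.2.2⟩, h.2.1⟩⟩
    have e9 : (S ∩ T2) \ T1 = S ∩ (T2 \ T1) := by
      ext x; simp only [Finset.mem_inter, Finset.mem_sdiff]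
      exact and_assoc
    have e10 := Finset.card_inter_add_card_sdiff (S ∩ T2) T1
    rw [e8, e9] at e10
    refine ⟨?_, by omega, ?_, by omega, by omega⟩
    · rw [← hIS]; exact Finset.inter_subset_left
    · rw [← hUS]; exact Finset.inter_subset_right
  -- |covers F| ≤ 2
  have hle2 : (covers n t F).card ≤ 2 := by
    by_contra hgt
    push_neg at hgt
    obtain ⟨U, hUsub, hU3⟩ := Finset.exists_subset_card_eq
      (show 3 ≤ (covers n t F).card by clear * - hgt; omega)
    obtain ⟨S1, S2, S3, h12, h13, h23, hU⟩ := Finset.card_eq_three.mp hU3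
    have hS1 : S1 ∈ covers n t F := hUsub (by rw [hU]; simp)
    have hS2 : S2 ∈ covers n t F := hUsub (by rw [hU]; simp)
    have hS3 : S3 ∈ covers n t F := hUsub (by rw [hU]; simp)
    obtain ⟨hI1, hIc, hU1, hx1c, hy1c⟩ := key S1 hS1
    obtain ⟨hI2, -, hU2, hx2c, hy2c⟩ := key S2 hS2
    obtain ⟨hI3, -, hU3', hx3c, hy3c⟩ := key S3 hS3
    obtain ⟨x1, hx1⟩ := Finset.card_eq_one.mp hx1c
    obtain ⟨y1, hy1⟩ := Finset.card_eq_one.mp hy1c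
    obtain ⟨x2, hx2⟩ := Finset.card_eq_one.mp hx2c
    obtain ⟨y2, hy2⟩ := Finset.card_eq_one.mp hy2c
    obtain ⟨x3, hx3⟩ := Finset.card_eq_one.mp hx3c
    obtain ⟨y3, hy3⟩ := Finset.card_eq_one.mp hy3c
    have hrep : ∀ S x y, T1 ∩ T2 ⊆ S → S ⊆ T1 ∪ T2 → S ∩ (T1 \ T2) = {x} →
        S ∩ (T2 \ T1) = {y} → S = insert x (insert y (T1 ∩ T2)) := by
      intro S x y hIS hSU hx hy
      apply Finset.Subset.antisymm
      · intro z hz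
        have hzU := hSU hz
        simp only [Finset.mem_union] at hzU
        simp only [Finset.mem_insert, Finset.mem_inter]
        by_cases hz1 : z ∈ T1 <;> by_cases hz2 : z ∈ T2
        · exact Or.inr (Or.inr ⟨hz1, hz2⟩)
        · left
          have hmm : z ∈ S ∩ (T1 \ T2) :=
            Finset.mem_inter.mpr ⟨hz, Finset.mem_sdiff.mpr ⟨hz1, hz2⟩⟩
          rw [hx] at hmm; exact Finset.mem_singleton.mp hmm
        · right; left
          have hmm : z ∈ S ∩ (T2 \ T1) :=
            Finset.mem_inter.mpr ⟨hz, Finset.mem_sdiff.mpr ⟨hz2, hz1⟩⟩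
          rw [hy] at hmm; exact Finset.mem_singleton.mp hmm
        · exact absurd hzU (by simp [hz1, hz2])
      · intro z hz
        simp only [Finset.mem_insert, Finset.mem_inter] at hz
        rcases hz with rfl | rfl | hz
        · have hmm : z ∈ S ∩ (T1 \ T2) := by rw [hx]; exact Finset.mem_singleton_self z
          exact (Finset.mem_inter.mp hmm).1
        · have hmm : z ∈ S ∩ (T2 \ T1) := by rw [hy]; exact Finset.mem_singleton_self z
          exact (Finset.mem_inter.mp hmm).1
        · exact hIS (Finset.mem_inter.mpr hz)
    have hxm : ∀ S x, S ∩ (T1 \ T2) = {x} → x ∈ T1 \ T2 := by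
      intro S x h
      have hmm : x ∈ S ∩ (T1 \ T2) := by rw [h]; exact Finset.mem_singleton_self x
      exact (Finset.mem_inter.mp hmm).2
    have hym : ∀ S y, S ∩ (T2 \ T1) = {y} → y ∈ T2 \ T1 := by
      intro S y h
      have hmm : y ∈ S ∩ (T2 \ T1) := by rw [h]; exact Finset.mem_singleton_self y
      exact (Finset.mem_inter.mp hmm).2
    have habc : (T1 \ T2).card = 2 := by
      have h6 := Finset.card_sdiff_add_card_inter T1 T2
      clear * - h6 hIc hT1card ht0; omega
    have hcdc : (T2 \ T1).card = 2 := by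
      have h6 := Finset.card_sdiff_add_card_inter T2 T1
      have h7 : T2 ∩ T1 = T1 ∩ T2 := Finset.inter_comm T2 T1
      rw [h7] at h6
      clear * - h6 hIc hT2card ht0; omega
    obtain ⟨a, b, hab, hITab⟩ := Finset.card_eq_two.mp habc
    obtain ⟨c, d, hcd, hITcd⟩ := Finset.card_eq_two.mp hcdc
    have hmem2 : ∀ x : ℕ, x ∈ T1 \ T2 → x = a ∨ x = b := by
      intro x hx; rw [hITab] at hx; simpa using hx
    have hmem2' : ∀ y : ℕ, y ∈ T2 \ T1 → y = c ∨ y = d := by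
      intro y hy; rw [hITcd] at hy; simpa using hy
    have hxa1 := hmem2 x1 (hxm S1 x1 hx1)
    have hxa2 := hmem2 x2 (hxm S2 x2 hx2)
    have hxa3 := hmem2 x3 (hxm S3 x3 hx3)
    have hyc1 := hmem2' y1 (hym S1 y1 hy1)
    have hyc2 := hmem2' y2 (hym S2 y2 hy2)
    have hyc3 := hmem2' y3 (hym S3 y3 hy3)
    have hpair : ∀ S S' x y x' y', S ∈ covers n t F → S' ∈ covers n t F →
        S ∩ (T1 \ T2) = {x} → S ∩ (T2 \ T1) = {y} →
        S' ∩ (T1 \ T2) = {x'} → S' ∩ (T2 \ T1) = {y'} → x = x' ∨ y = y' := by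
      intro S S' x y x' y' hS hS' hx hy hx' hy'
      by_contra hne
      push_neg at hne
      have hsub : S ∩ S' ⊆ T1 ∩ T2 := by
        intro z hz
        rw [Finset.mem_inter] at hz
        have hzU := (key S hS).2.2.1 hz.1
        rw [Finset.mem_union] at hzU
        by_cases hz1 : z ∈ T1 <;> by_cases hz2 : z ∈ T2
        · exact Finset.mem_inter.mpr ⟨hz1, hz2⟩
        · exfalso
          have e1 : z ∈ S ∩ (T1 \ T2) :=
            Finset.mem_inter.mpr ⟨hz.1, Finset.mem_sdiff.mpr ⟨hz1, hz2⟩⟩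
          have e2 : z ∈ S' ∩ (T1 \ T2) :=
            Finset.mem_inter.mpr ⟨hz.2, Finset.mem_sdiff.mpr ⟨hz1, hz2⟩⟩
          rw [hx] at e1; rw [hx'] at e2
          exact hne.1 ((Finset.mem_singleton.mp e1).symm.trans (Finset.mem_singleton.mp e2))
        · exfalso
          have e1 : z ∈ S ∩ (T2 \ T1) :=
            Finset.mem_inter.mpr ⟨hz.1, Finset.mem_sdiff.mpr ⟨hz2, hz1⟩⟩
          have e2 : z ∈ S' ∩ (T2 \ T1) :=
            Finset.mem_inter.mpr ⟨hz.2, Finset.mem_sdiff.mpr ⟨hz2, hz1⟩⟩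
          rw [hy] at e1; rw [hy'] at e2
          exact hne.2 ((Finset.mem_singleton.mp e1).symm.trans (Finset.mem_singleton.mp e2))
        · exact absurd hzU (by simp [hz1, hz2])
      have hge := hTf S hS S' hS'
      have hc := Finset.card_le_card hsub
      clear * - hge hc hIc ht0; omega
    have p12 := hpair S1 S2 x1 y1 x2 y2 hS1 hS2 hx1 hy1 hx2 hy2
    have p13 := hpair S1 S3 x1 y1 x3 y3 hS1 hS3 hx1 hy1 hx3 hy3
    have p23 := hpair S2 S3 x2 y2 x3 y3 hS2 hS3 hx2 hy2 hx3 hy3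
    have hr1 := hrep S1 x1 y1 hI1 hU1 hx1 hy1
    have hr2 := hrep S2 x2 y2 hI2 hU2 hx2 hy2
    have hr3 := hrep S3 x3 y3 hI3 hU3' hx3 hy3
    have d12 : ¬(x1 = x2 ∧ y1 = y2) := by
      rintro ⟨e1, e2⟩; exact h12 (by rw [hr1, hr2, e1, e2])
    have d13 : ¬(x1 = x3 ∧ y1 = y3) := by
      rintro ⟨e1, e2⟩; exact h13 (by rw [hr1, hr3, e1, e2])
    have d23 : ¬(x2 = x3 ∧ y2 = y3) := by
      rintro ⟨e1, e2⟩; exact h23 (by rw [hr2, hr3, e1, e2])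
    clear * - hxa1 hxa2 hxa3 hyc1 hyc2 hyc3 p12 p13 p23 d12 d13 d23 hab hcd
    omega
  have hcard2 : (covers n t F).card = 2 := le_antisymm hle2 hTf2
  refine ⟨hcard2, ?_⟩
  -- Part 2
  obtain ⟨Ta, Tb, hTabne, hcovF⟩ := Finset.card_eq_two.mp hcard2
  have hTam : Ta ∈ covers n t F := by rw [hcovF]; simp
  have hTbm : Tb ∈ covers n t F := by rw [hcovF]; simp
  have hTacard := (mem_covers'.mp hTam).2.1
  have hTbcard := (mem_covers'.mp hTbm).2.1
  have hJle : (Ta ∩ Tb).card ≤ t + 1 :=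
    hTacard ▸ Finset.card_le_card Finset.inter_subset_left
  have hJcard : (Ta ∩ Tb).card = t := by
    have hge := hTf Ta hTam Tb hTbm
    by_contra hne
    have h1 : Ta ∩ Tb = Ta :=
      Finset.eq_of_subset_of_card_le Finset.inter_subset_left
        (by clear * - hge hne hJle hTacard; omega)
    have h2 : Ta ⊆ Tb := by rw [← h1]; exact Finset.inter_subset_right
    exact hTabne (Finset.eq_of_subset_of_card_le h2
      (by clear * - hTacard hTbcard; omega))
  have hB0 : ∃ B ∈ G, ((Ta ∩ Tb) ∩ B).card < t := by
    by_contra h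
    push_neg at h
    have hmemτ : tau n t G ≤ t := Nat.sInf_le
      ⟨Ta ∩ Tb, Finset.inter_subset_left.trans (mem_covers'.mp hTam).1, hJcard, h⟩
    clear * - hmemτ htG; omega
  obtain ⟨B0, hB0G, hB0J⟩ := hB0
  have hB0card : B0.card = l := (Finset.mem_filter.mp (hGsub hB0G)).2
  have classif : ∀ S ∈ covers n t G,
      (∃ w ∈ Ta ∩ Tb, S = (Ta ∪ Tb).erase w) ∨
      ((Ta ∩ Tb) ⊆ S ∧ ∃ z ∈ B0 \ (Ta ∩ Tb), S = insert z (Ta ∩ Tb)) := by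
    intro S hS
    obtain ⟨hSsub, hScard, hScov⟩ := mem_covers'.mp hS
    have h1 := hcGF S hS Ta hTam
    have h2 := hcGF S hS Tb hTbm
    by_cases hJS : Ta ∩ Tb ⊆ S
    · right
      refine ⟨hJS, ?_⟩
      have hsd : (S \ (Ta ∩ Tb)).card = 1 := by
        rw [Finset.card_sdiff_of_subset hJS]; clear * - hScard hJcard; omega
      obtain ⟨z, hz⟩ := Finset.card_eq_one.mp hsd
      have hzS : z ∈ S ∧ z ∉ Ta ∩ Tb := by
        have hmm : z ∈ S \ (Ta ∩ Tb) := by rw [hz]; exact Finset.mem_singleton_self z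
        simpa [Finset.mem_sdiff] using hmm
      have hSeq : S = insert z (Ta ∩ Tb) := by
        have hu := Finset.union_sdiff_of_subset hJS
        rw [hz] at hu
        rw [← hu, Finset.union_comm, Finset.insert_eq]
      have hzB0 : z ∈ B0 := by
        by_contra hzB
        have hcovB := hScov B0 hB0G
        have hsub : S ∩ B0 ⊆ (Ta ∩ Tb) ∩ B0 := by
          intro x hx
          rw [Finset.mem_inter] at hx ⊢
          refine ⟨?_, hx.2⟩
          have hxS := hx.1
          rw [hSeq] at hxS
          rcases Finset.mem_insert.mp hxS with rfl | hmem
          · exact absurd hx.2 hzB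
          · exact hmem
        have h7 := Finset.card_le_card hsub
        clear * - h7 hcovB hB0J; omega
      exact ⟨z, Finset.mem_sdiff.mpr ⟨hzB0, hzS.2⟩, hSeq⟩
    · left
      obtain ⟨w, hwJ, hwS⟩ := Finset.not_subset.mp hJS
      refine ⟨w, hwJ, ?_⟩
      have hwa : w ∈ Ta := (Finset.mem_inter.mp hwJ).1
      have hwb : w ∈ Tb := (Finset.mem_inter.mp hwJ).2
      have hsub1 : S ∩ Ta ⊆ Ta.erase w := by
        intro x hx
        rw [Finset.mem_inter] at hx
        exact Finset.mem_erase.mpr ⟨fun h => hwS (h ▸ hx.1), hx.2⟩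
      have hea : (Ta.erase w).card = t := by
        rw [Finset.card_erase_of_mem hwa]; clear * - hTacard; omega
      have h1' : S ∩ Ta = Ta.erase w :=
        Finset.eq_of_subset_of_card_le hsub1 (by clear * - hea h1; omega)
      have hsub2 : S ∩ Tb ⊆ Tb.erase w := by
        intro x hx
        rw [Finset.mem_inter] at hx
        exact Finset.mem_erase.mpr ⟨fun h => hwS (h ▸ hx.1), hx.2⟩
      have heb : (Tb.erase w).card = t := by
        rw [Finset.card_erase_of_mem hwb]; clear * - hTbcard; omega
      have h2' : S ∩ Tb = Tb.erase w :=
        Finset.eq_of_subset_of_card_le hsub2 (by clear * - heb h2; omega)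
      have hsubS : (Ta ∪ Tb).erase w ⊆ S := by
        intro x hx
        rw [Finset.mem_erase, Finset.mem_union] at hx
        rcases hx.2 with h | h
        · have hmm : x ∈ Ta.erase w := Finset.mem_erase.mpr ⟨hx.1, h⟩
          rw [← h1'] at hmm; exact (Finset.mem_inter.mp hmm).1
        · have hmm : x ∈ Tb.erase w := Finset.mem_erase.mpr ⟨hx.1, h⟩
          rw [← h2'] at hmm; exact (Finset.mem_inter.mp hmm).1
      have hUcard : ((Ta ∪ Tb).erase w).card = t + 1 := by
        rw [Finset.card_erase_of_mem (Finset.mem_union_left _ hwa)]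
        have h8 := Finset.card_union_add_card_inter Ta Tb
        clear * - h8 hTacard hTbcard hJcard; omega
      exact (Finset.eq_of_subset_of_card_le hsubS (by clear * - hUcard hScard; omega)).symm
  by_cases hc : ∃ S ∈ covers n t G, (Ta ∩ Tb) ⊆ S
  · obtain ⟨S0, hS0, hJS0⟩ := hc
    have hJB0 : t - 1 ≤ ((Ta ∩ Tb) ∩ B0).card := by
      rcases classif S0 hS0 with ⟨w, hwJ, hS0eq⟩ | ⟨-, z, hzB, hS0eq⟩
      · exfalso
        have hmm := hJS0 hwJ
        rw [hS0eq] at hmm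
        exact (Finset.mem_erase.mp hmm).1 rfl
      · have hcovB := (mem_covers'.mp hS0).2.2 B0 hB0G
        have hsub : S0 ∩ B0 ⊆ insert z ((Ta ∩ Tb) ∩ B0) := by
          intro x hx
          rw [Finset.mem_inter] at hx
          have hxS := hx.1
          rw [hS0eq] at hxS
          rcases Finset.mem_insert.mp hxS with rfl | hmem
          · exact Finset.mem_insert_self _ _
          · exact Finset.mem_insert_of_mem (Finset.mem_inter.mpr ⟨hmem, hx.2⟩)
        have h5 := Finset.card_le_card hsub
        have h6 := Finset.card_insert_le z ((Ta ∩ Tb) ∩ B0)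
        clear * - h5 h6 hcovB hB0J ht0; omega
    have himg : covers n t G ⊆
        ((Ta ∩ Tb).image (fun w => (Ta ∪ Tb).erase w)) ∪
        ((B0 \ (Ta ∩ Tb)).image (fun z => insert z (Ta ∩ Tb))) := by
      intro S hS
      rcases classif S hS with ⟨w, hw, hSeq⟩ | ⟨-, z, hz, hSeq⟩
      · exact Finset.mem_union_left _ (Finset.mem_image.mpr ⟨w, hw, hSeq.symm⟩)
      · exact Finset.mem_union_right _ (Finset.mem_image.mpr ⟨z, hz, hSeq.symm⟩)
    have hcount := Finset.card_le_card himg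
    have hc1 := Finset.card_union_le ((Ta ∩ Tb).image (fun w => (Ta ∪ Tb).erase w))
      ((B0 \ (Ta ∩ Tb)).image (fun z => insert z (Ta ∩ Tb)))
    have hc2 := Finset.card_image_le (s := Ta ∩ Tb) (f := fun w => (Ta ∪ Tb).erase w)
    have hc3 := Finset.card_image_le (s := B0 \ (Ta ∩ Tb)) (f := fun z => insert z (Ta ∩ Tb))
    have hc4 := Finset.card_sdiff_add_card_inter B0 (Ta ∩ Tb)
    have hc5 : B0 ∩ (Ta ∩ Tb) = (Ta ∩ Tb) ∩ B0 := Finset.inter_comm _ _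
    rw [hc5] at hc4
    clear * - hcount hc1 hc2 hc3 hc4 hJcard hJB0 hB0card hl ht0; omega
  · have himg1 : covers n t G ⊆ (Ta ∩ Tb).image (fun w => (Ta ∪ Tb).erase w) := by
      intro S hS
      rcases classif S hS with ⟨w, hw, hSeq⟩ | ⟨hJS, -⟩
      · exact Finset.mem_image.mpr ⟨w, hw, hSeq.symm⟩
      · exact absurd ⟨S, hS, hJS⟩ hc
    have h9 := (Finset.card_le_card himg1).trans Finset.card_image_le
    clear * - h9 hJcard hl; omega
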